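/- arXiv:0711.1887 — 6 statements merged into one kernel-verified Lean document; each statement's English description precedes it below -/
import Mathlib

section
/- Let a, b > 0 and let π_{a,b} denote the Beta(2a,2b) distribution on [0,1]. Then for every continuously differentiable function f : ℝ → ℝ (restricted to [0,1]), the Poincaré inequality ∫_0^1 f(x)² π_{a,b}(dx) ≤ (1/(a+b)) ∫_0^1 x(1-x) f'(x)² π_{a,b}(dx) + (∫_0^1 f(x) π_{a,b}(dx))² holds. Equivalently, the operator r(1-r) d²/dr² + (a-(a+b)r) d/dr on [0,1] has spectral gap at least a+b in L²(π_{a,b}). -/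
/-!
Let `ρ` be the Beta(α, β) density and `m = α / (α + β)`. The function
`φ x = x (1 - x) ρ x / (α + β)` vanishes at `0` and `1` and satisfies `φ' = (m - x) ρ`.
The variance of `f` is at most `∫ (f - f m)² ρ`, Cauchy–Schwarz gives
`(f x - f m)² ≤ (x - m) ∫ₘˣ f'²`, and one integration by parts against `φ` turns
`∫ (x - m) (∫ₘˣ f'²) ρ x dx` into `∫ f'² φ`. This is the Poincaré inequality for Beta(α, β) with
constant `1 / (α + β)`; for Beta(2a, 2b) the constant `1 / (2 (a + b))` is at most `1 / (a + b)`.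
-/

open MeasureTheory Set

/-- The Beta(a,b) distribution on [0,1]. -/
noncomputable def betaMeasure (a b : ℝ) : Measure ℝ :=
  (volume.restrict (Icc (0:ℝ) 1)).withDensity fun x =>
    ENNReal.ofReal (Real.Gamma (a + b) / (Real.Gamma a * Real.Gamma b)
      * x ^ (a - 1) * (1 - x) ^ (b - 1))

theorem integral_sq_le_integral_sub_sq_add_sq_integral {Ω : Type*} [MeasurableSpace Ω]
    {μ : Measure Ω} [IsProbabilityMeasure μ] {X : Ω → ℝ} (hX : MemLp X 2 μ) (c : ℝ) :
    ∫ ω, X ω ^ 2 ∂μ ≤ ∫ ω, (X ω - c) ^ 2 ∂μ + (∫ ω, X ω ∂μ) ^ 2 := by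
  have hvar := ProbabilityTheory.variance_eq_sub hX
  have hshift := ProbabilityTheory.variance_sub_const hX.aestronglyMeasurable c
  have hle := ProbabilityTheory.variance_le_expectation_sq (X := fun ω => X ω - c)
    (hX.aestronglyMeasurable.sub aestronglyMeasurable_const)
  simp only [Pi.pow_apply] at hvar hle
  linarith

theorem sq_integral_le_mul_integral_sq {g : ℝ → ℝ} (hg : Continuous g) (a b : ℝ) :
    (∫ t in a..b, g t) ^ 2 ≤ (b - a) * ∫ t in a..b, g t ^ 2 := by
  rcases eq_or_ne a b with rfl | hab
  · simp
  set c := (∫ t in a..b, g t) / (b - a)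
  have hnonneg : 0 ≤ (b - a) * ∫ t in a..b, (g t - c) ^ 2 := by
    rcases le_total a b with h | h
    · exact mul_nonneg (sub_nonneg.2 h) (intervalIntegral.integral_nonneg h fun _ _ => sq_nonneg _)
    · rw [intervalIntegral.integral_symm]
      nlinarith [intervalIntegral.integral_nonneg (μ := volume) h fun t _ => sq_nonneg (g t - c)]
  have hexpand : ∫ t in a..b, (g t - c) ^ 2
      = (∫ t in a..b, g t ^ 2) - 2 * c * (∫ t in a..b, g t) + c ^ 2 * (b - a) := by
    simp only [sub_sq]
    rw [intervalIntegral.integral_add, intervalIntegral.integral_sub,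
      intervalIntegral.integral_mul_const, intervalIntegral.integral_const_mul,
      intervalIntegral.integral_const, smul_eq_mul]
    · ring
    all_goals apply Continuous.intervalIntegrable; fun_prop
  have hc : c * (b - a) = ∫ t in a..b, g t := div_mul_cancel₀ _ (sub_ne_zero.2 hab.symm)
  rw [hexpand] at hnonneg
  nlinarith

theorem sq_sub_le_mul_integral_deriv_sq {f : ℝ → ℝ} (hf : ContDiff ℝ 1 f) (x m : ℝ) :
    (f x - f m) ^ 2 ≤ (x - m) * ∫ t in m..x, deriv f t ^ 2 := by
  have hf' : Continuous (deriv f) := hf.continuous_deriv le_rfl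
  rw [← intervalIntegral.integral_deriv_eq_sub (fun t _ => hf.differentiable one_ne_zero t)
    (hf'.intervalIntegrable _ _)]
  exact sq_integral_le_mul_integral_sq hf' m x

theorem integral_sub_sq_mul_le_integral_deriv_sq_mul {f ρ φ : ℝ → ℝ} {a b m : ℝ}
    (hf : ContDiff ℝ 1 f) (hab : a ≤ b) (hρ : IntervalIntegrable ρ volume a b)
    (hρ_nonneg : ∀ x ∈ Icc a b, 0 ≤ ρ x) (hφ : ContinuousOn φ (Icc a b))
    (hφ' : ∀ x ∈ Ioo a b, HasDerivAt φ ((m - x) * ρ x) x) (hφa : φ a = 0) (hφb : φ b = 0) :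
    ∫ x in a..b, (f x - f m) ^ 2 * ρ x ≤ ∫ x in a..b, deriv f x ^ 2 * φ x := by
  have hf' : Continuous (deriv f) := hf.continuous_deriv le_rfl
  set G : ℝ → ℝ := fun x => ∫ t in m..x, deriv f t ^ 2
  have hG : ∀ x, HasDerivAt G (deriv f x ^ 2) x := fun x =>
    ((hf'.pow 2).integral_hasStrictDerivAt m x).hasDerivAt
  have hGc : Continuous G := continuous_iff_continuousAt.2 fun x => (hG x).continuousAt
  have hφ_int : IntervalIntegrable (fun x => deriv f x ^ 2 * φ x) volume a b :=
    ((hf'.pow 2).continuousOn.mul (uIcc_of_le hab ▸ hφ)).intervalIntegrable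
  have hGρ_int : IntervalIntegrable (fun x => (x - m) * G x * ρ x) volume a b :=
    hρ.continuousOn_mul (by fun_prop)
  have hparts : ∫ x in a..b, (x - m) * G x * ρ x = ∫ x in a..b, deriv f x ^ 2 * φ x := by
    have hderiv : ∀ x ∈ Ioo a b, HasDerivAt (fun x => φ x * G x)
        (-((x - m) * G x * ρ x) + deriv f x ^ 2 * φ x) x := fun x hx =>
      ((hφ' x hx).mul (hG x)).congr_deriv (by ring)
    have hFTC := intervalIntegral.integral_eq_sub_of_hasDerivAt_of_le hab
      (hφ.mul hGc.continuousOn) hderiv (hGρ_int.neg.add hφ_int)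
    rw [intervalIntegral.integral_add (f := fun x => -((x - m) * G x * ρ x)) hGρ_int.neg hφ_int,
      intervalIntegral.integral_neg, Pi.mul_apply, Pi.mul_apply, hφa, hφb, zero_mul, zero_mul,
      sub_zero] at hFTC
    linarith
  have hfρ_int : IntervalIntegrable (fun x => (f x - f m) ^ 2 * ρ x) volume a b :=
    hρ.continuousOn_mul ((hf.continuous.sub continuous_const).pow 2).continuousOn
  calc ∫ x in a..b, (f x - f m) ^ 2 * ρ x ≤ ∫ x in a..b, (x - m) * G x * ρ x :=
        intervalIntegral.integral_mono_on hab hfρ_int hGρ_int fun x hx =>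
          mul_le_mul_of_nonneg_right (sq_sub_le_mul_integral_deriv_sq hf x m) (hρ_nonneg x hx)
    _ = ∫ x in a..b, deriv f x ^ 2 * φ x := hparts

noncomputable def betaDensity (α β x : ℝ) : ℝ :=
  Real.Gamma (α + β) / (Real.Gamma α * Real.Gamma β) * x ^ (α - 1) * (1 - x) ^ (β - 1)

/-- `x (1 - x) * betaDensity α β x`, written so as to be continuous at `0` and `1`; divided by
`α + β` it is the Stein kernel of Beta(α, β) times its density. -/
noncomputable def betaStein (α β x : ℝ) : ℝ :=
  Real.Gamma (α + β) / (Real.Gamma α * Real.Gamma β) * x ^ α * (1 - x) ^ β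

variable {α β : ℝ}

theorem betaMeasure_eq_withDensity : betaMeasure α β =
    (volume.restrict (Icc 0 1)).withDensity fun x => ENNReal.ofReal (betaDensity α β x) :=
  rfl

theorem measurable_betaDensity : Measurable (betaDensity α β) := by
  unfold betaDensity
  fun_prop

theorem betaDensity_nonneg (hα : 0 < α) (hβ : 0 < β) {x : ℝ} (hx : x ∈ Icc 0 1) :
    0 ≤ betaDensity α β x :=
  mul_nonneg (mul_nonneg (div_nonneg (Real.Gamma_pos_of_pos (add_pos hα hβ)).le
    (mul_pos (Real.Gamma_pos_of_pos hα) (Real.Gamma_pos_of_pos hβ)).le)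
    (Real.rpow_nonneg hx.1 _)) (Real.rpow_nonneg (sub_nonneg.2 hx.2) _)

theorem betaMeasure_eq_probabilityTheory_betaMeasure :
    betaMeasure α β = ProbabilityTheory.betaMeasure α β := by
  rw [betaMeasure_eq_withDensity, ProbabilityTheory.betaMeasure,
    ← withDensity_indicator measurableSet_Icc]
  refine withDensity_congr_ae ?_
  filter_upwards [indicator_ae_eq_of_ae_eq_set (f := fun x => ENNReal.ofReal (betaDensity α β x))
    (Ioo_ae_eq_Icc (a := (0:ℝ)) (b := 1)).symm] with x hx
  rw [hx, ProbabilityTheory.betaPDF_eq, ProbabilityTheory.beta, one_div_div]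
  by_cases h : x ∈ Ioo 0 1
  · rw [indicator_of_mem h, if_pos (mem_Ioo.1 h), betaDensity]
  · rw [indicator_of_notMem h, if_neg (mt mem_Ioo.2 h), ENNReal.ofReal_zero]

theorem isProbabilityMeasure_betaMeasure (hα : 0 < α) (hβ : 0 < β) :
    IsProbabilityMeasure (betaMeasure α β) :=
  betaMeasure_eq_probabilityTheory_betaMeasure ▸
    ProbabilityTheory.isProbabilityMeasureBeta hα hβ

theorem ae_mem_Icc_betaMeasure : ∀ᵐ x ∂betaMeasure α β, x ∈ Icc (0:ℝ) 1 :=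
  (withDensity_absolutelyContinuous _ _).ae_le (ae_restrict_mem measurableSet_Icc)

theorem memLp_betaMeasure (hα : 0 < α) (hβ : 0 < β) {f : ℝ → ℝ} (hf : Continuous f)
    (p : ENNReal) : MemLp f p (betaMeasure α β) := by
  have := isProbabilityMeasure_betaMeasure hα hβ
  obtain ⟨C, hC⟩ := isCompact_Icc.exists_bound_of_continuousOn hf.continuousOn
  exact MemLp.of_bound hf.aestronglyMeasurable C
    (ae_mem_Icc_betaMeasure.mono fun x hx => hC x hx)

theorem intervalIntegrable_betaDensity (hα : 0 < α) (hβ : 0 < β) :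
    IntervalIntegrable (betaDensity α β) volume 0 1 := by
  have hmass : ∫⁻ x in Icc (0:ℝ) 1, ENNReal.ofReal (betaDensity α β x) ≠ ⊤ := by
    have := (isProbabilityMeasure_betaMeasure hα hβ).measure_univ
    rw [betaMeasure_eq_withDensity, withDensity_apply _ MeasurableSet.univ,
      Measure.restrict_univ] at this
    exact this ▸ ENNReal.one_ne_top
  have hint : IntegrableOn (fun x => (ENNReal.ofReal (betaDensity α β x)).toReal) (Icc 0 1) :=
    integrable_toReal_of_lintegral_ne_top measurable_betaDensity.ennreal_ofReal.aemeasurable hmass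
  rw [intervalIntegrable_iff_integrableOn_Icc_of_le zero_le_one]
  exact hint.congr_fun (fun x hx => ENNReal.toReal_ofReal (betaDensity_nonneg hα hβ hx))
    measurableSet_Icc

theorem integral_betaMeasure (hα : 0 < α) (hβ : 0 < β) (h : ℝ → ℝ) :
    ∫ x, h x ∂betaMeasure α β = ∫ x in (0:ℝ)..1, h x * betaDensity α β x := by
  rw [betaMeasure_eq_withDensity, integral_withDensity_eq_integral_toReal_smul
    measurable_betaDensity.ennreal_ofReal (ae_of_all _ fun _ => ENNReal.ofReal_lt_top),
    intervalIntegral.integral_of_le zero_le_one, ← integral_Icc_eq_integral_Ioc]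
  refine setIntegral_congr_fun measurableSet_Icc fun x hx => ?_
  rw [ENNReal.toReal_ofReal (betaDensity_nonneg hα hβ hx), smul_eq_mul, mul_comm]

theorem continuous_betaStein (hα : 0 ≤ α) (hβ : 0 ≤ β) : Continuous (betaStein α β) := by
  unfold betaStein
  have := Real.continuous_rpow_const hα
  have := Real.continuous_rpow_const hβ
  fun_prop

theorem betaStein_zero (hα : α ≠ 0) : betaStein α β 0 = 0 := by
  simp [betaStein, Real.zero_rpow hα]

theorem betaStein_one (hβ : β ≠ 0) : betaStein α β 1 = 0 := by
  simp [betaStein, Real.zero_rpow hβ]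

theorem betaStein_eq (hα : α ≠ 0) (hβ : β ≠ 0) {x : ℝ} (hx : x ∈ Icc 0 1) :
    betaStein α β x = x * (1 - x) * betaDensity α β x := by
  have hxα : x ^ α = x ^ (α - 1) * x := by
    rw [← Real.rpow_add_one' hx.1 (by simpa using hα), sub_add_cancel]
  have hxβ : (1 - x) ^ β = (1 - x) ^ (β - 1) * (1 - x) := by
    rw [← Real.rpow_add_one' (sub_nonneg.2 hx.2) (by simpa using hβ), sub_add_cancel]
  rw [betaStein, betaDensity, hxα, hxβ]
  ring

theorem hasDerivAt_betaStein {x : ℝ} (hx : x ∈ Ioo 0 1) :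
    HasDerivAt (betaStein α β) ((α - (α + β) * x) * betaDensity α β x) x := by
  have h1x : 0 < 1 - x := sub_pos.2 hx.2
  have hpow := ((Real.hasDerivAt_rpow_const (p := α) (Or.inl hx.1.ne')).mul
    (((hasDerivAt_id' x).const_sub 1).rpow_const (p := β) (Or.inl h1x.ne'))).const_mul
    (Real.Gamma (α + β) / (Real.Gamma α * Real.Gamma β))
  refine (hpow.congr_deriv ?_).congr_of_eventuallyEq (.of_forall fun y => ?_)
  · rw [betaDensity, Real.rpow_sub_one hx.1.ne', Real.rpow_sub_one h1x.ne']
    field_simp [hx.1.ne', h1x.ne']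
    ring
  · simp only [betaStein, Pi.mul_apply]
    ring

theorem integral_sq_betaMeasure_le (hα : 0 < α) (hβ : 0 < β) {f : ℝ → ℝ}
    (hf : ContDiff ℝ 1 f) :
    ∫ x, f x ^ 2 ∂betaMeasure α β
      ≤ 1 / (α + β) * ∫ x, x * (1 - x) * deriv f x ^ 2 ∂betaMeasure α β
        + (∫ x, f x ∂betaMeasure α β) ^ 2 := by
  have := isProbabilityMeasure_betaMeasure hα hβ
  set m := α / (α + β) with hm
  have hcentre := integral_sq_le_integral_sub_sq_add_sq_integral
    (memLp_betaMeasure hα hβ hf.continuous 2) (f m)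
  have hstein : ∫ x, (f x - f m) ^ 2 ∂betaMeasure α β
      ≤ 1 / (α + β) * ∫ x, x * (1 - x) * deriv f x ^ 2 ∂betaMeasure α β := by
    rw [integral_betaMeasure hα hβ, integral_betaMeasure hα hβ,
      ← intervalIntegral.integral_const_mul]
    calc ∫ x in (0:ℝ)..1, (f x - f m) ^ 2 * betaDensity α β x
        ≤ ∫ x in (0:ℝ)..1, deriv f x ^ 2 * (betaStein α β x / (α + β)) :=
          integral_sub_sq_mul_le_integral_deriv_sq_mul hf zero_le_one
            (intervalIntegrable_betaDensity hα hβ) (fun x hx => betaDensity_nonneg hα hβ hx)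
            ((continuous_betaStein hα.le hβ.le).div_const _).continuousOn
            (fun x hx => ((hasDerivAt_betaStein hx).div_const _).congr_deriv
              (by rw [hm]; field_simp))
            (by rw [betaStein_zero hα.ne', zero_div]) (by rw [betaStein_one hβ.ne', zero_div])
      _ = _ := intervalIntegral.integral_congr fun x hx => by
          rw [uIcc_of_le zero_le_one] at hx
          rw [betaStein_eq hα.ne' hβ.ne' hx]
          ring
  linarith

/-- **Poincaré inequality for the Wright–Fisher diffusion.**
For `a, b > 0` the Beta(2a,2b) measure `π_{a,b}` satisfies, for every `C¹` function `f`,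
`∫ f² dπ ≤ (1/(a+b)) ∫ x(1-x) f'(x)² dπ + (∫ f dπ)²`; i.e. the operator
`x(1-x) d²/dx² + (a-(a+b)x) d/dx` has spectral gap at least `a+b` in `L²(π_{a,b})`. -/
theorem wrightFisher_poincare (a b : ℝ) (ha : 0 < a) (hb : 0 < b)
    (f : ℝ → ℝ) (hf : ContDiff ℝ 1 f) :
    ∫ x, f x ^ 2 ∂(betaMeasure (2 * a) (2 * b))
      ≤ (1 / (a + b)) * ∫ x, x * (1 - x) * deriv f x ^ 2 ∂(betaMeasure (2 * a) (2 * b))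
        + (∫ x, f x ∂(betaMeasure (2 * a) (2 * b))) ^ 2 := by
  have hα : 0 < 2 * a := by linarith
  have hβ : 0 < 2 * b := by linarith
  have hdirichlet : 0 ≤ ∫ x, x * (1 - x) * deriv f x ^ 2 ∂(betaMeasure (2 * a) (2 * b)) :=
    integral_nonneg_of_ae <| ae_mem_Icc_betaMeasure.mono fun x hx =>
      mul_nonneg (mul_nonneg hx.1 (sub_nonneg.2 hx.2)) (sq_nonneg _)
  have hconst : 1 / (2 * a + 2 * b) ≤ 1 / (a + b) :=
    one_div_le_one_div_of_le (by positivity) (by linarith)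
  calc _ ≤ 1 / (2 * a + 2 * b) * ∫ x, x * (1 - x) * deriv f x ^ 2 ∂(betaMeasure (2 * a) (2 * b))
        + (∫ x, f x ∂(betaMeasure (2 * a) (2 * b))) ^ 2 := integral_sq_betaMeasure_le hα hβ hf
    _ ≤ _ := by gcongr
end

section
/- Let 0 ≤ α < 1 and θ > −α, and let V_1, V_2, … be independent random variables where V_k has the Beta(1-α, θ+kα) distribution on [0,1]. Define X_1 = V_1 and X_n = V_n ∏_{k=1}^{n-1}(1-V_k) for n ≥ 2. Then almost surely ∑_{n=1}^∞ X_n = 1; equivalently, ∏_{k=1}^n (1-V_k) → 0 almost surely. Hence the two-parameter GEM distribution (the law of (X_1, X_2, …)) is concentrated on 𝔻_∞ = {x ∈ [0,1]^ℕ : ∑_{i≥1} x_i = 1}. -/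
open MeasureTheory ProbabilityTheory Filter Set
open scoped Topology

/-!
Since `∏_{k<n} (1 - V_k)` is antitone in `n` and lies in `[0,1]`, it converges almost surely,
and it suffices that its expectation tends to `0`. By independence this expectation is
`∏_{k<n} (1 - E V_k)`, which tends to `0` because `∑ E V_k = ∑ (1-α)/(1+θ+kα)` diverges like the
harmonic series. Once the products tend to `0`, `∑ X_n = 1` because the partial sums telescope:
`∑_{n<N} X_n = 1 - ∏_{k<N} (1 - V_k)`.
-/

/-- The Beta(a,b) distribution on [0,1]. -/
noncomputable def betaMeasure' (a b : ℝ) : Measure ℝ :=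
  (volume.restrict (Icc (0:ℝ) 1)).withDensity fun x =>
    ENNReal.ofReal (Real.Gamma (a + b) / (Real.Gamma a * Real.Gamma b)
      * x ^ (a - 1) * (1 - x) ^ (b - 1))

theorem intervalIntegral_rpow_mul_one_sub_rpow {a b : ℝ} (ha : 0 < a) (hb : 0 < b) :
    ∫ x in (0:ℝ)..1, x ^ (a - 1) * (1 - x) ^ (b - 1)
      = Real.Gamma a * Real.Gamma b / Real.Gamma (a + b) := by
  have hbeta : Complex.betaIntegral a b
      = ((∫ x in (0:ℝ)..1, x ^ (a - 1) * (1 - x) ^ (b - 1) : ℝ) : ℂ) := by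
    rw [Complex.betaIntegral, ← intervalIntegral.integral_ofReal]
    refine intervalIntegral.integral_congr fun x hx => ?_
    rw [uIcc_of_le zero_le_one] at hx
    push_cast
    rw [Complex.ofReal_cpow hx.1, Complex.ofReal_cpow (sub_nonneg.2 hx.2)]
    push_cast
    ring
  show _ = ProbabilityTheory.beta a b
  rw [beta_eq_betaIntegralReal a b ha hb, hbeta, Complex.ofReal_re]

theorem ae_mem_Icc_betaMeasure' (a b : ℝ) : ∀ᵐ x ∂betaMeasure' a b, x ∈ Icc (0:ℝ) 1 :=
  (withDensity_absolutelyContinuous _ _).ae_le (ae_restrict_mem measurableSet_Icc)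

theorem integral_id_betaMeasure' {a b : ℝ} (ha : 0 < a) (hb : 0 < b) :
    ∫ x, x ∂betaMeasure' a b = a / (a + b) := by
  set C := Real.Gamma (a + b) / (Real.Gamma a * Real.Gamma b)
  have hGa := Real.Gamma_pos_of_pos ha
  have hGb := Real.Gamma_pos_of_pos hb
  have hGab := Real.Gamma_pos_of_pos (add_pos ha hb)
  have hdensity : ∀ x ∈ Icc (0:ℝ) 1,
      (ENNReal.ofReal (C * x ^ (a - 1) * (1 - x) ^ (b - 1))).toReal • x
        = C * (x ^ (a + 1 - 1) * (1 - x) ^ (b - 1)) := by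
    rintro x ⟨hx0, hx1⟩
    have h1x : 0 ≤ 1 - x := sub_nonneg.2 hx1
    rw [ENNReal.toReal_ofReal (by positivity), smul_eq_mul, add_sub_cancel_right,
      ← sub_add_cancel a 1, Real.rpow_add_one' hx0 (by simpa using ha.ne'), add_sub_cancel_right]
    ring
  rw [betaMeasure', integral_withDensity_eq_integral_toReal_smul (by fun_prop)
      (ae_of_all _ fun _ => ENNReal.ofReal_lt_top),
    setIntegral_congr_fun measurableSet_Icc hdensity, integral_const_mul, integral_Icc_eq_integral_Ioc, ← intervalIntegral.integral_of_le zero_le_one,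
    intervalIntegral_rpow_mul_one_sub_rpow (by linarith) hb, Real.Gamma_add_one ha.ne',
    add_right_comm, Real.Gamma_add_one (add_pos ha hb).ne']
  simp only [C]
  field_simp

theorem not_summable_div_add_mul_natCast {c d e : ℝ} (hc : 0 < c) (hd : 0 < d) (he : 0 ≤ e) :
    ¬ Summable fun k : ℕ => c / (d + k * e) := by
  intro h
  have hle : ∀ k : ℕ, c / (d + e) * (1 / ((k + 1 : ℕ) : ℝ)) ≤ c / (d + k * e) := fun k => by
    rw [div_mul_div_comm, mul_one]
    refine div_le_div_of_nonneg_left hc.le (by positivity) ?_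
    push_cast
    nlinarith [mul_nonneg (Nat.cast_nonneg k : (0:ℝ) ≤ k) hd.le]
  have hharmonic : Summable fun k : ℕ => 1 / ((k + 1 : ℕ) : ℝ) :=
    (summable_mul_left_iff (by positivity : c / (d + e) ≠ 0)).1
      (h.of_nonneg_of_le (fun k => by positivity) hle)
  exact Real.not_summable_one_div_natCast ((summable_nat_add_iff 1).1 hharmonic)

section ProdOneSub

variable {v : ℕ → ℝ}

theorem prod_range_one_sub_mem_Icc (h0 : ∀ k, 0 ≤ v k) (h1 : ∀ k, v k ≤ 1) (n : ℕ) :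
    ∏ k ∈ Finset.range n, (1 - v k) ∈ Icc (0:ℝ) 1 :=
  ⟨Finset.prod_nonneg fun k _ => sub_nonneg.2 (h1 k),
    Finset.prod_le_one (fun k _ => sub_nonneg.2 (h1 k)) fun k _ => sub_le_self 1 (h0 k)⟩

theorem antitone_prod_range_one_sub (h0 : ∀ k, 0 ≤ v k) (h1 : ∀ k, v k ≤ 1) :
    Antitone fun n => ∏ k ∈ Finset.range n, (1 - v k) := by
  refine antitone_nat_of_succ_le fun n => ?_
  rw [Finset.prod_range_succ]
  exact mul_le_of_le_one_right (prod_range_one_sub_mem_Icc h0 h1 n).1 (sub_le_self 1 (h0 n))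

theorem tendsto_prod_range_one_sub_of_not_summable (h0 : ∀ k, 0 ≤ v k) (h1 : ∀ k, v k ≤ 1)
    (hv : ¬ Summable v) : Tendsto (fun n => ∏ k ∈ Finset.range n, (1 - v k)) atTop (𝓝 0) := by
  have hexp : Tendsto (fun n => Real.exp (-∑ k ∈ Finset.range n, v k)) atTop (𝓝 0) :=
    Real.tendsto_exp_atBot.comp <| tendsto_neg_atTop_atBot.comp <|
      (not_summable_iff_tendsto_nat_atTop_of_nonneg h0).1 hv
  refine squeeze_zero (fun n => (prod_range_one_sub_mem_Icc h0 h1 n).1) (fun n => ?_) hexp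
  rw [← Finset.sum_neg_distrib, Real.exp_sum]
  exact Finset.prod_le_prod (fun k _ => sub_nonneg.2 (h1 k)) fun k _ => Real.one_sub_le_exp_neg _

theorem sum_range_mul_prod_one_sub {R : Type*} [CommRing R] (u : ℕ → R) (n : ℕ) :
    ∑ i ∈ Finset.range n, u i * ∏ k ∈ Finset.range i, (1 - u k)
      = 1 - ∏ k ∈ Finset.range n, (1 - u k) := by
  induction n with
  | zero => simp
  | succ n ih =>
    rw [Finset.sum_range_succ, ih, Finset.prod_range_succ]
    ring

theorem hasSum_mul_prod_one_sub (h0 : ∀ k, 0 ≤ v k) (h1 : ∀ k, v k ≤ 1)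
    (hv : Tendsto (fun n => ∏ k ∈ Finset.range n, (1 - v k)) atTop (𝓝 0)) :
    HasSum (fun n => v n * ∏ k ∈ Finset.range n, (1 - v k)) 1 := by
  rw [hasSum_iff_tendsto_nat_of_nonneg
    fun n => mul_nonneg (h0 n) (prod_range_one_sub_mem_Icc h0 h1 n).1]
  simp_rw [sum_range_mul_prod_one_sub]
  simpa using tendsto_const_nhds.sub hv

end ProdOneSub

namespace ProbabilityTheory

variable {Ω : Type*} [MeasurableSpace Ω] {μ : Measure Ω}

theorem iIndepFun.integral_finset_prod {ι : Type*} {X : ι → Ω → ℝ} (hX : iIndepFun X μ)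
    (mX : ∀ i, AEStronglyMeasurable (X i) μ) (s : Finset ι) :
    ∫ ω, ∏ i ∈ s, X i ω ∂μ = ∏ i ∈ s, ∫ ω, X i ω ∂μ := by
  simp_rw [← Finset.prod_coe_sort s]
  exact (hX.precomp (g := ((↑) : s → ι)) Subtype.val_injective).integral_fun_prod_eq_prod_integral
    fun i => mX i

theorem iIndepFun.integral_finset_prod_one_sub [IsProbabilityMeasure μ] {ι : Type*}
    {X : ι → Ω → ℝ} (hX : iIndepFun X μ) (mX : ∀ i, Measurable (X i))
    (hint : ∀ i, Integrable (X i) μ) (s : Finset ι) :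
    ∫ ω, ∏ i ∈ s, (1 - X i ω) ∂μ = ∏ i ∈ s, (1 - ∫ ω, X i ω ∂μ) := by
  have h := (hX.comp (fun _ x => 1 - x) fun _ => by fun_prop).integral_finset_prod
    (fun i => ((mX i).const_sub 1).aestronglyMeasurable) s
  simp only [Function.comp_apply] at h
  rw [h]
  refine Finset.prod_congr rfl fun i _ => ?_
  rw [integral_sub (integrable_const 1) (hint i), integral_const, probReal_univ, one_smul]

theorem ae_tendsto_prod_one_sub_of_not_summable [IsProbabilityMeasure μ] {V : ℕ → Ω → ℝ}
    (hindep : iIndepFun V μ) (hmeas : ∀ k, Measurable (V k))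
    (hV : ∀ᵐ ω ∂μ, ∀ k, V k ω ∈ Icc (0:ℝ) 1) (hsum : ¬ Summable fun k => ∫ ω, V k ω ∂μ) :
    ∀ᵐ ω ∂μ, Tendsto (fun n => ∏ k ∈ Finset.range n, (1 - V k ω)) atTop (𝓝 0) := by
  have hVk := ae_all_iff.1 hV
  have hV_int : ∀ k, Integrable (V k) μ := fun k =>
    .of_bound (hmeas k).aestronglyMeasurable 1 <| by
      filter_upwards [hVk k] with ω hω using abs_le.2 ⟨by linarith [hω.1], hω.2⟩
  have hmean : ∀ k, ∫ ω, V k ω ∂μ ∈ Icc (0:ℝ) 1 := fun k => by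
    refine ⟨integral_nonneg_of_ae ((hVk k).mono fun ω hω => hω.1), ?_⟩
    simpa using integral_mono_ae (hV_int k) (integrable_const 1) ((hVk k).mono fun ω hω => hω.2)
  have hF_int : ∀ n, Integrable (fun ω => ∏ k ∈ Finset.range n, (1 - V k ω)) μ := by
    refine fun n => .of_bound ?_ 1 ?_
    · exact (Finset.measurable_prod _ fun k _ => (hmeas k).const_sub 1).aestronglyMeasurable
    · filter_upwards [hV] with ω hω
      have h := prod_range_one_sub_mem_Icc (fun k => (hω k).1) (fun k => (hω k).2) n
      rw [Real.norm_of_nonneg h.1]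
      exact h.2
  refine tendsto_of_integral_tendsto_of_antitone hF_int (integrable_zero _ _ _) ?_ ?_ ?_
  · simp only [hindep.integral_finset_prod_one_sub hmeas hV_int, integral_zero]
    exact tendsto_prod_range_one_sub_of_not_summable (fun k => (hmean k).1) (fun k => (hmean k).2)
      hsum
  · filter_upwards [hV] with ω hω
    exact antitone_prod_range_one_sub (fun k => (hω k).1) (fun k => (hω k).2)
  · filter_upwards [hV] with ω hω n
    exact (prod_range_one_sub_mem_Icc (fun k => (hω k).1) (fun k => (hω k).2) n).1

end ProbabilityTheory

/-- `V i` is the paper's `V_{i+1}`. -/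
theorem gem_two_param_concentrated_on_simplex
    {Ω : Type*} [MeasurableSpace Ω] (P : Measure Ω) [IsProbabilityMeasure P]
    (α θ : ℝ) (hα₀ : 0 ≤ α) (hα₁ : α < 1) (hθ : -α < θ)
    (V : ℕ → Ω → ℝ)
    (hmeas : ∀ i, Measurable (V i))
    (hindep : iIndepFun V P)
    (hlaw : ∀ i : ℕ, P.map (V i) = betaMeasure' (1 - α) (θ + (i + 1) * α)) :
    ∀ᵐ ω ∂P,
      Tendsto (fun n => ∏ k ∈ Finset.range n, (1 - V k ω)) atTop (nhds 0)
      ∧ ∑' n, (V n ω * ∏ k ∈ Finset.range n, (1 - V k ω)) = 1 := by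
  have hV : ∀ᵐ ω ∂P, ∀ k, V k ω ∈ Icc (0:ℝ) 1 := ae_all_iff.2 fun k =>
    ae_of_ae_map (hmeas k).aemeasurable (hlaw k ▸ ae_mem_Icc_betaMeasure' _ _)
  have hmean : ∀ k : ℕ, ∫ ω, V k ω ∂P = (1 - α) / ((1 + θ) + k * α) := fun k => by
    have hb : 0 < θ + (k + 1) * α := by nlinarith [mul_nonneg (Nat.cast_nonneg k : (0:ℝ) ≤ k) hα₀]
    calc ∫ ω, V k ω ∂P = ∫ x, x ∂(P.map (V k)) :=
          (integral_map (hmeas k).aemeasurable aestronglyMeasurable_id).symm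
      _ = (1 - α) / ((1 - α) + (θ + (k + 1) * α)) := by
          rw [hlaw k, integral_id_betaMeasure' (by linarith) hb]
      _ = (1 - α) / ((1 + θ) + k * α) := by ring
  have hsum : ¬ Summable fun k => ∫ ω, V k ω ∂P := by
    simp_rw [hmean]
    exact not_summable_div_add_mul_natCast (by linarith) (by linarith) hα₀
  filter_upwards [hV, ae_tendsto_prod_one_sub_of_not_summable hindep hmeas hV hsum] with ω hω hlim
  exact ⟨hlim, (hasSum_mul_prod_one_sub (fun k => (hω k).1) (fun k => (hω k).2) hlim).tsum_eq⟩
end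

section
/- For x ∈ [0,1]^ℕ with ∑_{i≥1} x_i ≤ 1, x_k > 0 and ∑_{l=1}^k x_l < 1 for all k, define for i,j ≥ 1: a_{ij}(x) = x_i x_j ∑_{k=1}^{min(i,j)} (δ_{ki}(1−∑_{l=1}^{k-1} x_l) − x_k)(δ_{kj}(1−∑_{l=1}^{k-1} x_l) − x_k) / (x_k (1−∑_{l=1}^k x_l)). Then ∑_{i,j=1}^∞ |a_{ij}(x)| ≤ 3. -/
/-! With `R_k = 1 - ∑_{l ≤ k} x_l` and `C_m = ∑_{k < m} x_k / R_k`, every summand of `a_ij`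
with `k < min(i,j)` equals `x_k / R_k`, so `a_ij = x_i x_j (C_{min(i,j)} - 1)` for `i ≠ j` and
`a_ii = x_i² C_i + x_i R_i`. Since `C` is nonnegative and increasing,
`|a_ij| ≤ x_i (C_i + 1) x_j + δ_ij x_i`. Exchanging the order of summation,
`∑_i x_i C_i = ∑_k (x_k / R_k) ∑_{i > k} x_i ≤ ∑_k x_k ≤ 1`, so this dominating family sums to at
most `2 · 1 + 1 = 3`. -/

open Finset

/-- The diffusion coefficients of the GEM process (indices starting at 0, so index `i`
stands for the paper's `i+1`; the paper's `∑_{l=1}^{k-1}` is `∑ l ∈ range k`, etc.):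
`a_{ij}(x) = x_i x_j ∑_{k=1}^{min(i,j)}
  (δ_{ki}(1−∑_{l<k}x_l) − x_k)(δ_{kj}(1−∑_{l<k}x_l) − x_k) / (x_k(1−∑_{l≤k}x_l))`. -/
noncomputable def gemA (x : ℕ → ℝ) (i j : ℕ) : ℝ :=
  x i * x j * ∑ k ∈ Finset.range (min i j + 1),
    (((if k = i then (1:ℝ) else 0) * (1 - ∑ l ∈ Finset.range k, x l) - x k) *
      ((if k = j then (1:ℝ) else 0) * (1 - ∑ l ∈ Finset.range k, x l) - x k)) /
    (x k * (1 - ∑ l ∈ Finset.range (k + 1), x l))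

noncomputable def tailMass (x : ℕ → ℝ) (k : ℕ) : ℝ := 1 - ∑ l ∈ range (k + 1), x l

noncomputable def oddsSum (x : ℕ → ℝ) (m : ℕ) : ℝ := ∑ k ∈ range m, x k / tailMass x k

theorem hasSum_ite_diag {α M : Type*} [DecidableEq α] [AddCommMonoid M] [TopologicalSpace M]
    {g : α → M} {a : M} (hg : HasSum g a) :
    HasSum (fun p : α × α => if p.1 = p.2 then g p.1 else 0) a := by
  have hdiag : Function.Injective fun i : α => (i, i) := fun _ _ h => (Prod.ext_iff.mp h).1
  refine (hdiag.hasSum_iff ?_).mp (by simpa [Function.comp_def] using hg)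
  rintro ⟨i, j⟩ hij
  exact if_neg fun (h : i = j) => hij ⟨i, by rw [h]⟩

theorem hasSum_mul_add_ite_diag {ι : Type*} [DecidableEq ι] {f g : ι → ℝ} {a b : ℝ}
    (hf0 : ∀ i, 0 ≤ f i) (hg0 : ∀ i, 0 ≤ g i) (hf : HasSum f a) (hg : HasSum g b) :
    HasSum (fun p : ι × ι => f p.1 * g p.2 + if p.1 = p.2 then g p.1 else 0) (a * b + b) :=
  (hf.mul hg (hf.summable.mul_of_nonneg hg.summable hf0 hg0)).add (hasSum_ite_diag hg)

section

variable {x : ℕ → ℝ}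

theorem one_sub_sum_range_sub_eq_tailMass (k : ℕ) :
    1 - ∑ l ∈ range k, x l - x k = tailMass x k := by
  rw [tailMass, sum_range_succ]; ring

theorem gemA_summand_of_lt_min {i j k : ℕ} (hxk : x k ≠ 0) (hk : k < min i j) :
    ((if k = i then (1:ℝ) else 0) * (1 - ∑ l ∈ range k, x l) - x k) *
        ((if k = j then (1:ℝ) else 0) * (1 - ∑ l ∈ range k, x l) - x k) /
      (x k * (1 - ∑ l ∈ range (k + 1), x l)) = x k / tailMass x k := by
  rw [if_neg (by omega), if_neg (by omega), ← tailMass]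
  field_simp
  ring

theorem sum_range_min_gemA_summand (hx : ∀ k, x k ≠ 0) (i j : ℕ) :
    ∑ k ∈ range (min i j),
      ((if k = i then (1:ℝ) else 0) * (1 - ∑ l ∈ range k, x l) - x k) *
        ((if k = j then (1:ℝ) else 0) * (1 - ∑ l ∈ range k, x l) - x k) /
      (x k * (1 - ∑ l ∈ range (k + 1), x l)) = oddsSum x (min i j) :=
  sum_congr rfl fun _ hk => gemA_summand_of_lt_min (hx _) (mem_range.mp hk)

theorem gemA_comm (i j : ℕ) : gemA x i j = gemA x j i := by
  rw [gemA, gemA, min_comm, mul_comm (x i)]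
  exact congrArg _ (sum_congr rfl fun _ _ => by ring)

theorem gemA_self (hx : ∀ k, x k ≠ 0) (i : ℕ) :
    gemA x i i = x i ^ 2 * oddsSum x i + x i * tailMass x i := by
  have := sum_range_min_gemA_summand hx i i
  rw [min_self] at this
  rw [gemA, min_self, sum_range_succ, this, if_pos rfl, one_mul,
    one_sub_sum_range_sub_eq_tailMass, ← tailMass]
  field_simp [hx i]

theorem gemA_of_lt (hx : ∀ k, x k ≠ 0) {i j : ℕ} (hR : tailMass x i ≠ 0) (hij : i < j) :
    gemA x i j = x i * x j * (oddsSum x i - 1) := by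
  have := sum_range_min_gemA_summand hx i j
  rw [min_eq_left hij.le] at this
  rw [gemA, min_eq_left hij.le, sum_range_succ, this, if_pos rfl, if_neg hij.ne, one_mul,
    one_sub_sum_range_sub_eq_tailMass, ← tailMass]
  field_simp [hx i]
  ring

theorem oddsSum_nonneg (hx : ∀ k, 0 ≤ x k) (hR : ∀ k, 0 ≤ tailMass x k) (m : ℕ) :
    0 ≤ oddsSum x m :=
  sum_nonneg fun k _ => div_nonneg (hx k) (hR k)

theorem oddsSum_mono (hx : ∀ k, 0 ≤ x k) (hR : ∀ k, 0 ≤ tailMass x k) : Monotone (oddsSum x) :=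
  fun _ _ hmn => sum_le_sum_of_subset_of_nonneg (range_subset_range.mpr hmn)
    fun k _ _ => div_nonneg (hx k) (hR k)

theorem sum_range_mul_oddsSum_le (hx : ∀ k, 0 ≤ x k) {N : ℕ} (hS : ∑ l ∈ range N, x l ≤ 1) :
    ∑ i ∈ range N, x i * oddsSum x i ≤ ∑ k ∈ range N, x k := by
  have hswap : ∑ i ∈ range N, x i * oddsSum x i
      = ∑ k ∈ range N, x k / tailMass x k * ∑ i ∈ Ico (k + 1) N, x i := by
    simp only [oddsSum, mul_sum, ← Nat.Ico_zero_eq_range]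
    rw [sum_Ico_Ico_comm']
    exact sum_congr rfl fun _ _ => sum_congr rfl fun _ _ => mul_comm _ _
  rw [hswap]
  refine sum_le_sum fun k hk => ?_
  have htail : ∑ i ∈ Ico (k + 1) N, x i ≤ tailMass x k := by
    rw [sum_Ico_eq_sub _ (mem_range.mp hk), tailMass]
    linarith
  have hR : 0 ≤ tailMass x k := (sum_nonneg fun i _ => hx i).trans htail
  calc x k / tailMass x k * ∑ i ∈ Ico (k + 1) N, x i
      ≤ x k / tailMass x k * tailMass x k := by gcongr; exact div_nonneg (hx k) hR
    _ ≤ x k := by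
      rcases hR.eq_or_lt with hR0 | hRpos
      · simp [← hR0, hx k]
      · rw [div_mul_cancel₀ _ hRpos.ne']

theorem abs_gemA_le (hx : ∀ k, 0 < x k) (hR : ∀ k, 0 < tailMass x k) (i j : ℕ) :
    |gemA x i j| ≤ x i * (oddsSum x i + 1) * x j + if i = j then x i else 0 := by
  have hx0 k := (hx k).le
  have hxne k := (hx k).ne'
  have hC := oddsSum_nonneg hx0 (fun k => (hR k).le)
  have hCmono := oddsSum_mono hx0 (fun k => (hR k).le)
  have hR1 k : tailMass x k ≤ 1 := by
    have := sum_nonneg fun l (_ : l ∈ range (k + 1)) => hx0 l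
    rw [tailMass]; linarith
  rcases lt_trichotomy i j with hij | rfl | hji
  · rw [gemA_of_lt hxne (hR i).ne' hij, if_neg hij.ne, abs_le]
    constructor <;> nlinarith [mul_pos (hx i) (hx j), hC i]
  · rw [gemA_self hxne, if_pos rfl,
      abs_of_nonneg (by have := hR i; have := hC i; have := hx i; positivity)]
    nlinarith [mul_le_mul_of_nonneg_left (hR1 i) (hx0 i), sq_nonneg (x i)]
  · rw [gemA_comm, gemA_of_lt hxne (hR j).ne' hji, if_neg hji.ne', abs_le]
    have := hCmono hji.le
    constructor <;> nlinarith [mul_pos (hx i) (hx j), hC j]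

end

theorem gemA_abs_sum_le_three_general (x : ℕ → ℝ)
    (hpos : ∀ k, 0 < x k)
    (hpartial : ∀ n, ∑ l ∈ Finset.range (n + 1), x l < 1) :
    Summable (fun p : ℕ × ℕ => |gemA x p.1 p.2|)
    ∧ ∑' p : ℕ × ℕ, |gemA x p.1 p.2| ≤ 3 := by
  have hx0 k := (hpos k).le
  have hS : ∀ n, ∑ l ∈ range n, x l ≤ 1
    | 0 => by simp
    | n + 1 => (hpartial n).le
  have hR k : 0 < tailMass x k := sub_pos.mpr (hpartial k)
  set f := fun i => x i * (oddsSum x i + 1)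
  have hf0 i : 0 ≤ f i :=
    mul_nonneg (hx0 i) (by linarith [oddsSum_nonneg hx0 (fun k => (hR k).le) i])
  have hfS N : ∑ i ∈ range N, f i ≤ 2 := by
    simp only [f, mul_add_one, sum_add_distrib]
    linarith [sum_range_mul_oddsSum_le hx0 (hS N), hS N]
  have hx := summable_of_sum_range_le hx0 hS
  have hf := summable_of_sum_range_le hf0 hfS
  have hG := hasSum_mul_add_ite_diag hf0 hx0 hf.hasSum hx.hasSum
  have hle (p : ℕ × ℕ) := abs_gemA_le hpos hR p.1 p.2
  have hsum := hG.summable.of_nonneg_of_le (fun _ => abs_nonneg _) hle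
  refine ⟨hsum, (hsum.tsum_le_tsum hle hG.summable).trans ?_⟩
  calc _ = (∑' i, f i) * ∑' i, x i + ∑' i, x i := hG.tsum_eq
    _ ≤ 2 * 1 + 1 := by
      have hxt := Real.tsum_le_of_sum_range_le hx0 hS
      gcongr
      · exact tsum_nonneg hx0
      · exact Real.tsum_le_of_sum_range_le hf0 hfS
    _ = 3 := by norm_num

/-- **Bound on the diffusion coefficients:** for `x ∈ 𝔻̄_∞` with all `x_k > 0` and all
partial sums `< 1`, one has `∑_{i,j} |a_{ij}(x)| ≤ 3`. -/
theorem gemA_abs_sum_le_three (x : ℕ → ℝ)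
    (hpos : ∀ k, 0 < x k)
    (hpartial : ∀ n, ∑ l ∈ Finset.range (n + 1), x l < 1)
    (hsum : ∑' i, x i ≤ 1) :
    Summable (fun p : ℕ × ℕ => |gemA x p.1 p.2|)
    ∧ ∑' p : ℕ × ℕ, |gemA x p.1 p.2| ≤ 3 :=
  gemA_abs_sum_le_three_general x hpos hpartial
end

section
/- Let (a_k)_{k≥1}, (b_k)_{k≥1} be sequences of strictly positive reals. For x ∈ [0,1]^ℕ with ∑_{i≥1} x_i ≤ 1, x_k > 0 and ∑_{l=1}^k x_l < 1 for all k, define b_i(x) = x_i ∑_{k=1}^{i} (δ_{ik}(1−∑_{l=1}^{k-1} x_l) − x_k)(a_k(1−∑_{l=1}^{k-1} x_l) − (a_k+b_k) x_k) / (x_k (1−∑_{l=1}^k x_l)). Then |b_i(x)| ≤ ∑_{k=1}^{i} (b_k x_k + a_k) for every i ≥ 1. -/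
open Finset

/-- The drift coefficients of the GEM process with parameter sequences `(a_k), (b_k)`
(indices starting at 0, so index `i` stands for the paper's `i+1`):
`b_i(x) = x_i ∑_{k=1}^{i} (δ_{ik}(1−∑_{l<k}x_l) − x_k)(a_k(1−∑_{l<k}x_l) − (a_k+b_k)x_k)
          / (x_k(1−∑_{l≤k}x_l))`. -/
noncomputable def gemB (a b : ℕ → ℝ) (x : ℕ → ℝ) (i : ℕ) : ℝ :=
  x i * ∑ k ∈ Finset.range (i + 1),
    (((if i = k then (1:ℝ) else 0) * (1 - ∑ l ∈ Finset.range k, x l) - x k) *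
      (a k * (1 - ∑ l ∈ Finset.range k, x l) - (a k + b k) * x k)) /
    (x k * (1 - ∑ l ∈ Finset.range (k + 1), x l))

/-! With `s = ∑_{l<k} x_l` and `r = 1 - s - x_k`, the factor `a_k (1 - s) - (a_k + b_k) x_k`
equals `a_k r - b_k x_k`, so the `k`-th summand of `b_i(x)` collapses to `a_i r_i - b_i x_i`
for `k = i` and to `b_k x_k (x_i / r_k) - a_k x_i` for `k < i`. Since `x_i ≤ r_k ≤ 1`, each is a
difference of two nonnegative numbers bounded by `a_k` and `b_k x_k`, hence has absolute value
at most `b_k x_k + a_k`. -/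

theorem abs_sub_le_add_of_nonneg_of_le {A B p q : ℝ} (hA₀ : 0 ≤ A) (hA : A ≤ p)
    (hB₀ : 0 ≤ B) (hB : B ≤ q) : |A - B| ≤ p + q :=
  abs_sub_le_iff.2 ⟨by linarith, by linarith⟩

theorem sum_range_succ_add_le_sum_range_succ {x : ℕ → ℝ} (hx : ∀ l, 0 ≤ x l) {k i : ℕ}
    (hki : k < i) : ∑ l ∈ range (k + 1), x l + x i ≤ ∑ l ∈ range (i + 1), x l := by
  rw [sum_range_succ _ i]
  exact add_le_add_left
    (sum_le_sum_of_subset_of_nonneg (range_subset_range.2 hki) fun l _ _ => hx l) _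

section GemSummand

variable (a b x : ℕ → ℝ)

noncomputable def gemSummand (i k : ℕ) : ℝ :=
  (((if i = k then (1:ℝ) else 0) * (1 - ∑ l ∈ range k, x l) - x k) *
      (a k * (1 - ∑ l ∈ range k, x l) - (a k + b k) * x k)) /
    (x k * (1 - ∑ l ∈ range (k + 1), x l))

theorem gemB_eq_sum_mul_gemSummand (i : ℕ) :
    gemB a b x i = ∑ k ∈ range (i + 1), x i * gemSummand a b x i k :=
  mul_sum _ _ _

variable {a b x}

theorem mul_gemSummand_self {k : ℕ} (hx : x k ≠ 0) (hr : 1 - ∑ l ∈ range (k + 1), x l ≠ 0) :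
    x k * gemSummand a b x k k = a k * (1 - ∑ l ∈ range (k + 1), x l) - b k * x k := by
  rw [sum_range_succ] at hr ⊢
  unfold gemSummand
  rw [if_pos rfl, sum_range_succ]
  field_simp
  ring

theorem mul_gemSummand_of_ne {i k : ℕ} (hik : i ≠ k) (hx : x k ≠ 0)
    (hr : 1 - ∑ l ∈ range (k + 1), x l ≠ 0) :
    x i * gemSummand a b x i k =
      b k * x k * (x i / (1 - ∑ l ∈ range (k + 1), x l)) - a k * x i := by
  rw [sum_range_succ] at hr ⊢
  unfold gemSummand
  rw [if_neg hik, sum_range_succ]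
  field_simp
  ring

end GemSummand

theorem gemB_abs_le_general (a b : ℕ → ℝ) (ha : ∀ k, 0 < a k) (hb : ∀ k, 0 < b k)
    (x : ℕ → ℝ)
    (hpos : ∀ k, 0 < x k)
    (hpartial : ∀ n, ∑ l ∈ Finset.range (n + 1), x l < 1) :
    ∀ i, |gemB a b x i| ≤ ∑ k ∈ Finset.range (i + 1), (b k * x k + a k) := by
  intro i
  have hx₀ : ∀ l, 0 ≤ x l := fun l => (hpos l).le
  have hr₀ : ∀ k, 0 < 1 - ∑ l ∈ range (k + 1), x l := fun k => sub_pos.2 (hpartial k)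
  have hr₁ : ∀ k, 1 - ∑ l ∈ range (k + 1), x l ≤ 1 := fun k =>
    sub_le_self _ (sum_nonneg fun l _ => hx₀ l)
  rw [gemB_eq_sum_mul_gemSummand]
  refine (abs_sum_le_sum_abs _ _).trans (sum_le_sum fun k hk => ?_)
  have hbx : 0 ≤ b k * x k := (mul_pos (hb k) (hpos k)).le
  rcases (Nat.lt_succ_iff.1 (mem_range.1 hk)).eq_or_lt with rfl | hki
  · rw [mul_gemSummand_self (hpos k).ne' (hr₀ k).ne', abs_sub_comm]
    exact abs_sub_le_add_of_nonneg_of_le hbx le_rfl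
      (mul_nonneg (ha k).le (hr₀ k).le) (mul_le_of_le_one_right (ha k).le (hr₁ k))
  · have hxi : x i ≤ 1 - ∑ l ∈ range (k + 1), x l := by
      linarith [sum_range_succ_add_le_sum_range_succ hx₀ hki, hpartial i]
    rw [mul_gemSummand_of_ne hki.ne' (hpos k).ne' (hr₀ k).ne']
    exact abs_sub_le_add_of_nonneg_of_le
      (mul_nonneg hbx (div_nonneg (hx₀ i) (hr₀ k).le))
      (mul_le_of_le_one_right hbx (div_le_one_of_le₀ hxi (hr₀ k).le))
      (mul_nonneg (ha k).le (hx₀ i)) (mul_le_of_le_one_right (ha k).le (hxi.trans (hr₁ k)))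

/-- **Bound on the drift coefficients:** for strictly positive parameters `(a_k), (b_k)`
and `x ∈ 𝔻̄_∞` with all `x_k > 0` and all partial sums `< 1`,
`|b_i(x)| ≤ ∑_{k=1}^{i} (b_k x_k + a_k)` for every `i`. -/
theorem gemB_abs_le (a b : ℕ → ℝ) (ha : ∀ k, 0 < a k) (hb : ∀ k, 0 < b k)
    (x : ℕ → ℝ)
    (hpos : ∀ k, 0 < x k)
    (hpartial : ∀ n, ∑ l ∈ Finset.range (n + 1), x l < 1)
    (hsum : ∑' i, x i ≤ 1) :
    ∀ i, |gemB a b x i| ≤ ∑ k ∈ Finset.range (i + 1), (b k * x k + a k) :=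
  gemB_abs_le_general a b ha hb x hpos hpartial
end

section
/- Fix n ≥ 1 and let φ^{(n)}(x) = (φ_1(x),…,φ_n(x)) where φ_1(x) = x_1 and φ_k(x) = x_k ∏_{l=1}^{k-1}(1-x_l). Then for every x ∈ (0,1)^n, every 1 ≤ i ≤ n, and every continuously differentiable F : ℝⁿ → ℝ, the chain rule gives ∂/∂x_i (F ∘ φ^{(n)})(x) = ∑_{j=i}^{n} ((δ_{ij} − x_i) φ_j(x) / (x_i(1-x_i))) · (∂F/∂y_j)(φ^{(n)}(x)). -/
open Finset

/-- Partial derivative in the `i`-th coordinate: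
`∂_i F (x) = d/dt F(x with i-th coordinate t) at t = x_i`. -/
noncomputable def pd {n : ℕ} (i : Fin n) (F : (Fin n → ℝ) → ℝ) (x : Fin n → ℝ) : ℝ :=
  deriv (fun t => F (Function.update x i t)) (x i)

/-- The finite stick-breaking map `φ^{(n)}`: `φ_k(x) = x_k ∏_{l<k} (1 - x_l)`. -/
noncomputable def sbFin {n : ℕ} (x : Fin n → ℝ) : Fin n → ℝ :=
  fun k => x k * ∏ l ∈ Finset.Iio k, (1 - x l)

/-!
Along the `i`-th coordinate every `φ_j` is affine in `x_i`: constant for `j < i`, proportional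
to `x_i` for `j = i` and to `1 - x_i` for `j > i`. Hence `∂_i φ_j = (δ_ij - x_i) φ_j / (x_i (1 - x_i))`
for `j ≥ i` and `0` otherwise, and the formula is the chain rule for partial derivatives.
-/

theorem HasDerivAt.pd_eq {m : ℕ} {f : (Fin m → ℝ) → ℝ} {x : Fin m → ℝ} {i : Fin m} {a : ℝ}
    (h : HasDerivAt (fun t => f (Function.update x i t)) a (x i)) : pd i f x = a :=
  h.deriv

theorem hasDerivAt_comp_update {m n : ℕ} {F : (Fin n → ℝ) → ℝ} {g : (Fin m → ℝ) → Fin n → ℝ}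
    {x : Fin m → ℝ} {i : Fin m} {v : Fin n → ℝ} (hF : DifferentiableAt ℝ F (g x))
    (hg : HasDerivAt (fun t => g (Function.update x i t)) v (x i)) :
    HasDerivAt (fun t => F (g (Function.update x i t))) (fderiv ℝ F (g x) v) (x i) := by
  have hF' : HasFDerivAt F (fderiv ℝ F (g x)) (g (Function.update x i (x i))) := by
    rw [Function.update_eq_self]
    exact hF.hasFDerivAt
  exact hF'.comp_hasDerivAt (x i) hg

theorem pd_eq_fderiv_single {n : ℕ} {F : (Fin n → ℝ) → ℝ} {y : Fin n → ℝ}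
    (hF : DifferentiableAt ℝ F y) (j : Fin n) :
    pd j F y = fderiv ℝ F y (Pi.single j 1) :=
  (hasDerivAt_comp_update (g := id) hF (hasDerivAt_update y j (y j))).pd_eq

theorem pd_comp {m n : ℕ} {F : (Fin n → ℝ) → ℝ} {g : (Fin m → ℝ) → Fin n → ℝ}
    {x : Fin m → ℝ} {i : Fin m} {v : Fin n → ℝ} (hF : DifferentiableAt ℝ F (g x))
    (hg : HasDerivAt (fun t => g (Function.update x i t)) v (x i)) :
    pd i (fun z => F (g z)) x = ∑ j, v j * pd j F (g x) := by
  rw [(hasDerivAt_comp_update hF hg).pd_eq]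
  conv_lhs => rw [← univ_sum_single v]
  rw [map_sum]
  refine sum_congr rfl fun j _ => ?_
  rw [pd_eq_fderiv_single hF, ← smul_eq_mul, ← map_smul, ← Pi.single_smul', smul_eq_mul, mul_one]

section StickBreaking

variable {n : ℕ} {x : Fin n → ℝ} {i j : Fin n}

open Function

theorem prod_Iio_one_sub_update_of_le (t : ℝ) (hji : j ≤ i) :
    ∏ l ∈ Iio j, (1 - update x i t l) = ∏ l ∈ Iio j, (1 - x l) :=
  prod_congr rfl fun l hl => by rw [update_of_ne ((mem_Iio.mp hl).trans_le hji).ne]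

theorem prod_Iio_one_sub_update_of_lt (t : ℝ) (hij : i < j) :
    (∏ l ∈ Iio j, (1 - update x i t l)) * (1 - x i) = (1 - t) * ∏ l ∈ Iio j, (1 - x l) := by
  have hi : i ∈ Iio j := mem_Iio.mpr hij
  have hupd : (fun l => 1 - update x i t l) = update (fun l => 1 - x l) i (1 - t) :=
    funext (apply_update (fun _ s => 1 - s) x i t)
  rw [hupd, prod_update_of_mem hi, prod_eq_mul_prod_sdiff_singleton_of_mem hi]
  ring

theorem sbFin_update_of_lt (t : ℝ) (hji : j < i) : sbFin (update x i t) j = sbFin x j := by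
  rw [sbFin, sbFin, update_of_ne hji.ne, prod_Iio_one_sub_update_of_le t hji.le]

theorem sbFin_update_self_mul (t : ℝ) : sbFin (update x i t) i * x i = t * sbFin x i := by
  rw [sbFin, sbFin, update_self, prod_Iio_one_sub_update_of_le t le_rfl]
  ring

theorem sbFin_update_of_gt_mul (t : ℝ) (hij : i < j) :
    sbFin (update x i t) j * (1 - x i) = (1 - t) * sbFin x j := by
  rw [sbFin, sbFin, update_of_ne hij.ne', mul_assoc, prod_Iio_one_sub_update_of_lt t hij]
  ring

theorem hasDerivAt_sbFin_update_self (hx : x i ≠ 0) :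
    HasDerivAt (fun t => sbFin (update x i t) i) (sbFin x i / x i) (x i) := by
  have hlin : (fun t => sbFin (update x i t) i) = fun t => t * (sbFin x i / x i) :=
    funext fun t => by rw [← mul_div_assoc, eq_div_iff hx, sbFin_update_self_mul]
  simpa [hlin] using (hasDerivAt_id (x i)).mul_const (sbFin x i / x i)

theorem hasDerivAt_sbFin_update_of_lt (hij : i < j) (hx : x i ≠ 1) :
    HasDerivAt (fun t => sbFin (update x i t) j) (-(sbFin x j / (1 - x i))) (x i) := by
  have hx' : 1 - x i ≠ 0 := sub_ne_zero.mpr hx.symm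
  have hlin : (fun t => sbFin (update x i t) j) = fun t => (1 - t) * (sbFin x j / (1 - x i)) :=
    funext fun t => by rw [← mul_div_assoc, eq_div_iff hx', sbFin_update_of_gt_mul t hij]
  simpa [hlin] using ((hasDerivAt_id (x i)).const_sub 1).mul_const (sbFin x j / (1 - x i))

theorem hasDerivAt_sbFin_update (hx₀ : x i ≠ 0) (hx₁ : x i ≠ 1) :
    HasDerivAt (fun t => sbFin (update x i t))
      (fun j => if i ≤ j then
        ((if i = j then (1 : ℝ) else 0) - x i) * sbFin x j / (x i * (1 - x i)) else 0) (x i) := by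
  refine hasDerivAt_pi.mpr fun j => ?_
  rcases lt_trichotomy j i with hji | rfl | hij
  · simpa [sbFin_update_of_lt _ hji, not_le.mpr hji] using hasDerivAt_const (x i) (sbFin x j)
  · refine (hasDerivAt_sbFin_update_self hx₀).congr_deriv ?_
    rw [if_pos le_rfl, if_pos rfl]
    field_simp
  · refine (hasDerivAt_sbFin_update_of_lt hij hx₁).congr_deriv ?_
    rw [if_pos hij.le, if_neg hij.ne]
    field_simp
    ring

end StickBreaking

theorem stickBreak_chain_rule_general (n : ℕ)
    (F : (Fin n → ℝ) → ℝ) (hF : ContDiff ℝ 1 F)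
    (x : Fin n → ℝ) (hx : ∀ k, x k ∈ Set.Ioo (0:ℝ) 1) (i : Fin n) :
    pd i (fun z => F (sbFin z)) x
      = ∑ j ∈ Finset.Ici i,
          (((if i = j then (1:ℝ) else 0) - x i) * sbFin x j / (x i * (1 - x i)))
            * pd j F (sbFin x) := by
  obtain ⟨hx₀, hx₁⟩ := hx i
  rw [pd_comp ((hF.differentiable one_ne_zero) _) (hasDerivAt_sbFin_update hx₀.ne' hx₁.ne),
    ← filter_le_eq_Ici, sum_filter]
  simp only [ite_mul, zero_mul]

/-- **Chain rule for the stick-breaking map.** For `x ∈ (0,1)^n`, every `i`, and every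
continuously differentiable `F : ℝⁿ → ℝ`,
`∂_i (F ∘ φ^{(n)})(x) = ∑_{j≥i} ((δ_{ij} − x_i) φ_j(x) / (x_i(1-x_i))) ∂_j F(φ^{(n)}(x))`. -/
theorem stickBreak_chain_rule (n : ℕ) (hn : 1 ≤ n)
    (F : (Fin n → ℝ) → ℝ) (hF : ContDiff ℝ 1 F)
    (x : Fin n → ℝ) (hx : ∀ k, x k ∈ Set.Ioo (0:ℝ) 1) (i : Fin n) :
    pd i (fun z => F (sbFin z)) x
      = ∑ j ∈ Finset.Ici i,
          (((if i = j then (1:ℝ) else 0) - x i) * sbFin x j / (x i * (1 - x i)))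
            * pd j F (sbFin x) :=
  stickBreak_chain_rule_general n F hF x hx i
end

section
/- Fix n ≥ 1 and let φ^{(n)}(x) = (φ_1(x),…,φ_n(x)) with φ_1(x) = x_1, φ_k(x) = x_k ∏_{l<k}(1-x_l). For y in the image of (0,1)^n under φ^{(n)}, define a_{ij}(y) = y_i y_j ∑_{k=1}^{min(i,j)} (δ_{ki}(1−∑_{l<k} y_l) − y_k)(δ_{kj}(1−∑_{l<k} y_l) − y_k)/(y_k(1−∑_{l≤k} y_l)) for 1 ≤ i,j ≤ n. Then for all continuously differentiable F, G : ℝⁿ → ℝ and all x ∈ (0,1)^n, ∑_{i=1}^n x_i(1-x_i) · ∂_i(F∘φ^{(n)})(x) · ∂_i(G∘φ^{(n)})(x) = ∑_{i,j=1}^n a_{ij}(φ^{(n)}(x)) · (∂_i F)(φ^{(n)}(x)) · (∂_j G)(φ^{(n)}(x)). -/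
open Finset

/-- The diffusion matrix of the GEM process (with `Finset.Iic (min i j)` playing the
role of `∑_{k=1}^{min(i,j)}`, and `δ` the Kronecker delta):
`a_{ij}(y) = y_i y_j ∑_{k≤min(i,j)}
 (δ_{ki}(1−∑_{l<k}y_l) − y_k)(δ_{kj}(1−∑_{l<k}y_l) − y_k)/(y_k(1−∑_{l≤k}y_l))`. -/
noncomputable def gemAFin {n : ℕ} (y : Fin n → ℝ) (i j : Fin n) : ℝ :=
  y i * y j * ∑ k ∈ Finset.Iic (min i j),
    (((if k = i then (1:ℝ) else 0) * (1 - ∑ l ∈ Finset.Iio k, y l) - y k) *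
      ((if k = j then (1:ℝ) else 0) * (1 - ∑ l ∈ Finset.Iio k, y l) - y k)) /
    (y k * (1 - ∑ l ∈ Finset.Iic k, y l))

/-!
The stick-breaking map is affine in each coordinate: moving `x_k` changes `φ` along the
row `∂_k φ = ∏_{l<k}(1 - x_l) · c_k`, so the chain rule turns the left side into
`∑_{i,j} (∑_k x_k(1-x_k) ∂_kφ_i ∂_kφ_j) ∂_iF ∂_jG`. With `y = φ(x)` the partial sums
telescope, `1 - ∑_{l<k} y_l = ∏_{l<k}(1-x_l)`, and `y_i (δ_{ki}(1 - ∑_{l<k} y_l) - y_k)` equals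
`c_{ki}` times the denominator `u_k = y_k (1 - ∑_{l≤k} y_l)`. Hence the `k`-th summand of
`a_{ij}(y)` is `c_{ki} c_{kj} u_k² / u_k = c_{ki} c_{kj} u_k = x_k(1-x_k) ∂_kφ_i ∂_kφ_j`,
also when `u_k = 0` (where `0 / 0 = 0`).
-/

open Function

lemma pd_eq_fderiv {n : ℕ} {F : (Fin n → ℝ) → ℝ} {y : Fin n → ℝ}
    (hF : DifferentiableAt ℝ F y) (i : Fin n) :
    pd i F y = fderiv ℝ F y (Pi.single i 1) := by
  have h := hF.hasFDerivAt.comp_hasDerivAt_of_eq (y i) (hasDerivAt_update y i (y i)) (by simp)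
  exact h.deriv

lemma pd_comp_eq_sum {n : ℕ} {F : (Fin n → ℝ) → ℝ} {Φ : (Fin n → ℝ) → Fin n → ℝ}
    {x v : Fin n → ℝ} {m : Fin n} (hΦ : HasDerivAt (fun t => Φ (update x m t)) v (x m))
    (hF : DifferentiableAt ℝ F (Φ x)) :
    pd m (fun z => F (Φ z)) x = ∑ i, v i * pd i F (Φ x) := by
  have h : HasDerivAt (fun t => F (Φ (update x m t))) (fderiv ℝ F (Φ x) v) (x m) :=
    hF.hasFDerivAt.comp_hasDerivAt_of_eq (x m) hΦ (by simp)
  conv_lhs => rw [pd, h.deriv, pi_eq_sum_univ' v]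
  simp only [map_sum, map_smul, smul_eq_mul, pd_eq_fderiv hF]

lemma Finset.prod_Iio_eq_mul_of_lt {α β : Type*} [LinearOrder α] [LocallyFiniteOrder α]
    [LocallyFiniteOrderBot α] [CommMonoid β] (f : α → β) {k i : α} (h : k < i) :
    ∏ l ∈ Iio i, f l = (∏ l ∈ Iio k, f l) * f k * ∏ l ∈ Ioo k i, f l := by
  have hIio : Iio i = Iic k ∪ Ioo k i := by
    rw [← coe_inj, coe_union, coe_Iio, coe_Iic, coe_Ioo, Set.Iic_union_Ioo_eq_Iio h]
  rw [hIio, prod_union (disjoint_left.mpr fun l hl hl' => ?_), ← Iio_insert,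
    prod_insert (by simp), mul_comm (f k)]
  exact (mem_Iic.mp hl).not_gt (mem_Ioo.mp hl').1

/-- The length `∏_{l<k} (1 - x_l)` of stick left before the `k`-th break. -/
noncomputable def sbRest {n : ℕ} (x : Fin n → ℝ) (k : Fin n) : ℝ :=
  ∏ l ∈ Iio k, (1 - x l)

noncomputable def sbCoeff {n : ℕ} (x : Fin n → ℝ) (k i : Fin n) : ℝ :=
  if k = i then 1 else if k < i then -(x i * ∏ l ∈ Ioo k i, (1 - x l)) else 0

/-- The Jacobian `∂_k φ_i`; it carries the factor `sbRest x k`, which is what makes the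
identity below hold even where the denominators of `gemAFin` vanish. -/
noncomputable def sbJac {n : ℕ} (x : Fin n → ℝ) (k i : Fin n) : ℝ :=
  sbRest x k * sbCoeff x k i

lemma sbCoeff_of_lt {n : ℕ} (x : Fin n → ℝ) {k i : Fin n} (h : i < k) : sbCoeff x k i = 0 := by
  simp [sbCoeff, h.ne', h.not_gt]

lemma sbFin_eq_mul_sbRest {n : ℕ} (x : Fin n → ℝ) (k : Fin n) : sbFin x k = x k * sbRest x k :=
  rfl

lemma sbRest_of_lt {n : ℕ} (x : Fin n → ℝ) {k i : Fin n} (h : k < i) :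
    sbRest x i = sbRest x k * (1 - x k) * ∏ l ∈ Ioo k i, (1 - x l) :=
  prod_Iio_eq_mul_of_lt _ h

lemma sbFin_update {n : ℕ} (x : Fin n → ℝ) (k : Fin n) (t : ℝ) :
    sbFin (update x k t) = sbFin x + (t - x k) • sbJac x k := by
  have hfix : ∀ s : Finset (Fin n), k ∉ s → ∏ l ∈ s, (1 - update x k t l) = ∏ l ∈ s, (1 - x l) :=
    fun s hs => prod_congr rfl fun l hl => by rw [update_of_ne (ne_of_mem_of_not_mem hl hs)]
  funext i
  simp only [Pi.add_apply, Pi.smul_apply, smul_eq_mul, sbFin, sbJac]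
  rcases lt_trichotomy i k with h | rfl | h
  · rw [update_of_ne h.ne, hfix _ (by simp [h.le]), sbCoeff_of_lt x h]
    ring
  · rw [update_self, hfix _ (by simp)]
    simp only [sbRest, sbCoeff, if_true]
    ring
  · rw [update_of_ne h.ne', prod_Iio_eq_mul_of_lt _ h, prod_Iio_eq_mul_of_lt _ h,
      hfix _ (by simp), hfix _ (by simp), update_self]
    simp only [sbRest, sbCoeff, h.ne, h, if_false, if_true]
    ring

lemma hasDerivAt_sbFin_update_s11 {n : ℕ} (x : Fin n → ℝ) (k : Fin n) :
    HasDerivAt (fun t => sbFin (update x k t)) (sbJac x k) (x k) := by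
  simp only [sbFin_update]
  simpa using ((hasDerivAt_id (x k)).sub_const (x k)).smul_const (sbJac x k) |>.const_add (sbFin x)

lemma sum_Iio_sbFin {n : ℕ} (x : Fin n → ℝ) (k : Fin n) :
    ∑ l ∈ Iio k, sbFin x l = 1 - sbRest x k := by
  rw [sbRest, prod_one_sub_ordered, sub_sub_cancel]
  refine sum_congr rfl fun l hl => ?_
  rw [sbFin, Iio_filter_lt, min_eq_right (mem_Iio.mp hl).le]

lemma sum_Iic_sbFin {n : ℕ} (x : Fin n → ℝ) (k : Fin n) :
    ∑ l ∈ Iic k, sbFin x l = 1 - sbRest x k * (1 - x k) := by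
  rw [← Iio_insert, sum_insert (by simp), sum_Iio_sbFin, sbFin_eq_mul_sbRest]
  ring

lemma sbFin_mul_sub_eq_sbCoeff_mul {n : ℕ} (x : Fin n → ℝ) {k i : Fin n} (h : k ≤ i) :
    sbFin x i * ((if k = i then 1 else 0) * sbRest x k - sbFin x k)
      = sbCoeff x k i * (sbFin x k * (sbRest x k * (1 - x k))) := by
  rcases h.eq_or_lt with rfl | h
  · simp only [sbFin_eq_mul_sbRest, sbCoeff, if_true]
    ring
  · simp only [sbFin_eq_mul_sbRest, sbCoeff, h.ne, h, if_false, if_true, sbRest_of_lt x h]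
    ring

lemma gemAFin_sbFin {n : ℕ} (x : Fin n → ℝ) (i j : Fin n) :
    gemAFin (sbFin x) i j = ∑ k, x k * (1 - x k) * sbJac x k i * sbJac x k j := by
  rw [gemAFin, mul_sum, ← sum_subset (subset_univ (Iic (min i j)))]
  · refine sum_congr rfl fun k hk => ?_
    have hki : k ≤ i := (mem_Iic.mp hk).trans (min_le_left i j)
    have hkj : k ≤ j := (mem_Iic.mp hk).trans (min_le_right i j)
    set u := sbFin x k * (sbRest x k * (1 - x k))
    calc _ = (sbCoeff x k i * u) * (sbCoeff x k j * u) / u := by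
          rw [sum_Iio_sbFin, sum_Iic_sbFin, sub_sub_cancel, sub_sub_cancel,
            ← sbFin_mul_sub_eq_sbCoeff_mul x hki, ← sbFin_mul_sub_eq_sbCoeff_mul x hkj]
          ring
      _ = sbCoeff x k i * sbCoeff x k j * u := by
          rw [mul_mul_mul_comm, mul_div_assoc, mul_self_div_self]
      _ = x k * (1 - x k) * sbJac x k i * sbJac x k j := by
          simp only [u, sbJac, sbFin_eq_mul_sbRest]
          ring
  · intro k _ hk
    rcases min_lt_iff.mp (not_le.mp (mt mem_Iic.mpr hk)) with h | h <;>
      simp [sbJac, sbCoeff_of_lt x h]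

lemma sum_mul_sum_mul_sum_eq {ι κ R : Type*} [Fintype ι] [Fintype κ] [CommSemiring R]
    (w : ι → R) (A : ι → κ → R) (f g : κ → R) :
    ∑ m, w m * (∑ i, A m i * f i) * (∑ j, A m j * g j)
      = ∑ i, ∑ j, (∑ m, w m * A m i * A m j) * f i * g j := by
  calc _ = ∑ m, ∑ i, ∑ j, w m * A m i * A m j * f i * g j := by
          refine sum_congr rfl fun m _ => ?_
          rw [mul_assoc, sum_mul_sum, mul_sum]
          refine sum_congr rfl fun i _ => ?_
          rw [mul_sum]
          exact sum_congr rfl fun j _ => by ring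
    _ = _ := by
          simp only [sum_mul]
          exact sum_comm_cycle.symm

theorem stickBreak_carre_du_champ_general (n : ℕ)
    (F G : (Fin n → ℝ) → ℝ) (hF : ContDiff ℝ 1 F) (hG : ContDiff ℝ 1 G)
    (x : Fin n → ℝ) :
    ∑ i, x i * (1 - x i) * pd i (fun z => F (sbFin z)) x * pd i (fun z => G (sbFin z)) x
      = ∑ i, ∑ j, gemAFin (sbFin x) i j * pd i F (sbFin x) * pd j G (sbFin x) := by
  simp only [pd_comp_eq_sum (hasDerivAt_sbFin_update_s11 x _) (hF.differentiable one_ne_zero _),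
    pd_comp_eq_sum (hasDerivAt_sbFin_update_s11 x _) (hG.differentiable one_ne_zero _),
    sum_mul_sum_mul_sum_eq, gemAFin_sbFin]

/-- **Carré du champ identity for the stick-breaking map.** For `C¹` functions
`F, G : ℝⁿ → ℝ` and `x ∈ (0,1)^n`,
`∑_i x_i(1-x_i) ∂_i(F∘φ^{(n)})(x) ∂_i(G∘φ^{(n)})(x)
  = ∑_{i,j} a_{ij}(φ^{(n)}(x)) ∂_iF(φ^{(n)}(x)) ∂_jG(φ^{(n)}(x))`. -/
theorem stickBreak_carre_du_champ (n : ℕ) (hn : 1 ≤ n)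
    (F G : (Fin n → ℝ) → ℝ) (hF : ContDiff ℝ 1 F) (hG : ContDiff ℝ 1 G)
    (x : Fin n → ℝ) (hx : ∀ k, x k ∈ Set.Ioo (0:ℝ) 1) :
    ∑ i, x i * (1 - x i) * pd i (fun z => F (sbFin z)) x * pd i (fun z => G (sbFin z)) x
      = ∑ i, ∑ j, gemAFin (sbFin x) i j * pd i F (sbFin x) * pd j G (sbFin x) :=
  stickBreak_carre_du_champ_general n F G hF hG x
end
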